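/- Let R be a commutative ring, S a multiplicative subset of R, and M an R-module. (1) If A is a submodule of an R-module B and M is u-S-injective relative to B, then M is u-S-injective relative to A and M is u-S-injective relative to B/A. (2) For finitely many R-modules A_1, …, A_n, M is u-S-injective relative to ⊕_{i=1}^n A_i if and only if M is u-S-injective relative to each A_i. -/

import Mathlib

universe u v w

variable (R : Type u) [CommRing R]

/-- An `R`-module `T` is uniformly `S`-torsion if there is `s ∈ S` with `s • T = 0`. -/
def IsUSTorsion (S : Submonoid R) (T : Type*) [AddCommGroup T] [Module R T] : Prop :=
  ∃ s ∈ S, ∀ t : T, s • t = 0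

/-- `f` is a `u`-`S`-epimorphism if its cokernel is uniformly `S`-torsion. -/
def IsUSEpi (S : Submonoid R) {M N : Type*} [AddCommGroup M] [Module R M]
    [AddCommGroup N] [Module R N] (f : M →ₗ[R] N) : Prop :=
  IsUSTorsion R S (N ⧸ LinearMap.range f)

/-- `f` is a `u`-`S`-monomorphism if its kernel is uniformly `S`-torsion. -/
def IsUSMono (S : Submonoid R) {M N : Type*} [AddCommGroup M] [Module R M]
    [AddCommGroup N] [Module R N] (f : M →ₗ[R] N) : Prop :=
  IsUSTorsion R S (LinearMap.ker f)

/-- `P` is `u`-`S`-projective relative to `M` if for every `u`-`S`-epimorphism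
`f : M → N`, the induced map `Hom(P,M) → Hom(P,N)` is a `u`-`S`-epimorphism. -/
def IsUSProjRel (S : Submonoid R) (P : Type w) [AddCommGroup P] [Module R P]
    (M : Type v) [AddCommGroup M] [Module R M] : Prop :=
  ∀ (N : Type v) [AddCommGroup N] [Module R N] (f : M →ₗ[R] N),
    IsUSEpi R S f → IsUSEpi R S (LinearMap.llcomp (σ₁₂ := RingHom.id R) (σ₁₃ := RingHom.id R) R P M N f)

/-- `E` is `u`-`S`-injective relative to `M` if for every `u`-`S`-monomorphism
`f : K → M`, the induced map `Hom(M,E) → Hom(K,E)` is a `u`-`S`-epimorphism. -/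
def IsUSInjRel (S : Submonoid R) (E : Type w) [AddCommGroup E] [Module R E]
    (M : Type v) [AddCommGroup M] [Module R M] : Prop :=
  ∀ (K : Type v) [AddCommGroup K] [Module R K] (f : K →ₗ[R] M),
    IsUSMono R S f → IsUSEpi R S (LinearMap.lcomp R E f)


section Aux

variable {R}

lemma isUSEpi_iff' (S : Submonoid R) {M N : Type*} [AddCommGroup M] [Module R M]
    [AddCommGroup N] [Module R N] (f : M →ₗ[R] N) :
    (∃ s ∈ S, ∀ t : N ⧸ LinearMap.range f, s • t = 0) ↔
      ∃ s ∈ S, ∀ n : N, ∃ m : M, f m = s • n := by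
  constructor
  · rintro ⟨s, hs, h⟩
    refine ⟨s, hs, fun n => ?_⟩
    have := h (Submodule.Quotient.mk n)
    rw [← Submodule.Quotient.mk_smul, Submodule.Quotient.mk_eq_zero] at this
    exact this
  · rintro ⟨s, hs, h⟩
    refine ⟨s, hs, fun t => ?_⟩
    obtain ⟨n, rfl⟩ := Submodule.Quotient.mk_surjective _ t
    rw [← Submodule.Quotient.mk_smul, Submodule.Quotient.mk_eq_zero]
    exact h n

lemma isUSMono_iff (S : Submonoid R) {K B : Type*} [AddCommGroup K] [Module R K]
    [AddCommGroup B] [Module R B] (f : K →ₗ[R] B) :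
    IsUSMono R S f ↔ ∃ s ∈ S, ∀ k : K, f k = 0 → s • k = 0 := by
  constructor
  · rintro ⟨s, hs, h⟩
    refine ⟨s, hs, fun k hk => ?_⟩
    simpa using congrArg Subtype.val (h ⟨k, hk⟩)
  · rintro ⟨s, hs, h⟩
    refine ⟨s, hs, fun t => Subtype.ext ?_⟩
    simpa using h t.1 (LinearMap.mem_ker.mp t.2)

lemma isUSInjRel_iff (S : Submonoid R) (M : Type w) [AddCommGroup M] [Module R M]
    (B : Type v) [AddCommGroup B] [Module R B] :
    IsUSInjRel R S M B ↔
    ∀ (K : Type v) [AddCommGroup K] [Module R K] (f : K →ₗ[R] B),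
      IsUSMono R S f → ∃ s ∈ S, ∀ g : K →ₗ[R] M, ∃ h : B →ₗ[R] M, h.comp f = s • g := by
  unfold IsUSInjRel IsUSEpi IsUSTorsion
  refine forall_congr' fun K => ?_
  refine forall_congr' fun _ => forall_congr' fun _ => forall_congr' fun f =>
    imp_congr_right fun _ => ?_
  rw [isUSEpi_iff' S (LinearMap.lcomp R M f)]
  rfl

lemma injRel_of_injective (S : Submonoid R) (M : Type w) [AddCommGroup M] [Module R M]
    {A B : Type v} [AddCommGroup A] [Module R A] [AddCommGroup B] [Module R B]
    (ι : A →ₗ[R] B) (hι : Function.Injective ι) (h : IsUSInjRel R S M B) :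
    IsUSInjRel R S M A := by
  rw [isUSInjRel_iff] at h ⊢
  intro K _ _ f hf
  have hmono : IsUSMono R S (ι.comp f) := by
    rw [isUSMono_iff] at hf ⊢
    obtain ⟨s, hs, h0⟩ := hf
    exact ⟨s, hs, fun k hk => h0 k (hι (by simpa using hk))⟩
  obtain ⟨s, hs, hsur⟩ := h K (ι.comp f) hmono
  refine ⟨s, hs, fun g => ?_⟩
  obtain ⟨h', hh'⟩ := hsur g
  exact ⟨h'.comp ι, by rw [LinearMap.comp_assoc]; exact hh'⟩

lemma injRel_subsingleton (S : Submonoid R) (M : Type w) [AddCommGroup M] [Module R M]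
    (T : Type v) [AddCommGroup T] [Module R T] [Subsingleton T] :
    IsUSInjRel R S M T := by
  rw [isUSInjRel_iff]
  intro K _ _ f hf
  rw [isUSMono_iff] at hf
  obtain ⟨s, hs, h0⟩ := hf
  refine ⟨s, hs, fun g => ⟨0, ?_⟩⟩
  ext k
  have : s • k = 0 := h0 k (Subsingleton.elim _ _)
  simp only [LinearMap.comp_apply, LinearMap.zero_apply, LinearMap.smul_apply]
  rw [← map_smul, this, map_zero]

lemma injRel_quot (S : Submonoid R) (M : Type w) [AddCommGroup M] [Module R M]
    {B : Type v} [AddCommGroup B] [Module R B] (A : Submodule R B)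
    (h : IsUSInjRel R S M B) : IsUSInjRel R S M (B ⧸ A) := by
  rw [isUSInjRel_iff] at h ⊢
  intro K _ _ f hf
  set φ : B × K →ₗ[R] B ⧸ A :=
    A.mkQ.comp (LinearMap.fst R B K) - f.comp (LinearMap.snd R B K) with hφ
  set D : Submodule R (B × K) := LinearMap.ker φ with hD
  have memD : ∀ x : B × K, x ∈ D ↔ A.mkQ x.1 = f x.2 := by
    intro x
    simp [hD, hφ, LinearMap.mem_ker, sub_eq_zero]
  set p : D →ₗ[R] B := (LinearMap.fst R B K).comp D.subtype with hp
  set q : D →ₗ[R] K := (LinearMap.snd R B K).comp D.subtype with hq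
  have hmono : IsUSMono R S p := by
    rw [isUSMono_iff] at hf ⊢
    obtain ⟨s, hs, h0⟩ := hf
    refine ⟨s, hs, fun d hd => ?_⟩
    have hd1 : d.1.1 = 0 := hd
    have hdm := (memD d.1).mp d.2
    rw [hd1, map_zero] at hdm
    have : s • d.1.2 = 0 := h0 _ hdm.symm
    refine Subtype.ext (Prod.ext ?_ ?_)
    · show s • d.1.1 = 0
      rw [hd1, smul_zero]
    · exact this
  obtain ⟨s, hs, hsur⟩ := h D p hmono
  refine ⟨s, hs, fun g => ?_⟩
  obtain ⟨h', hh'⟩ := hsur (g.comp q)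
  have hle : A ≤ LinearMap.ker h' := by
    intro a ha
    have hmem : ((a, 0) : B × K) ∈ D := by
      rw [memD]
      simp [Submodule.Quotient.mk_eq_zero, ha, Submodule.mkQ_apply]
    have := congrArg (fun t => t (⟨(a, 0), hmem⟩ : D)) hh'
    simp only [LinearMap.comp_apply, LinearMap.smul_apply] at this
    have hpval : p (⟨(a, 0), hmem⟩ : D) = a := rfl
    have hqval : q (⟨(a, 0), hmem⟩ : D) = 0 := rfl
    rw [hpval, hqval] at this
    simpa using this
  refine ⟨A.liftQ h' hle, ?_⟩
  ext k
  obtain ⟨b, hb⟩ := A.mkQ_surjective (f k)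
  have hmem : ((b, k) : B × K) ∈ D := (memD (b, k)).mpr hb
  have := congrArg (fun t => t (⟨(b, k), hmem⟩ : D)) hh'
  simp only [LinearMap.comp_apply, LinearMap.smul_apply] at this
  have hpval : p (⟨(b, k), hmem⟩ : D) = b := rfl
  have hqval : q (⟨(b, k), hmem⟩ : D) = k := rfl
  rw [hpval, hqval] at this
  simp only [LinearMap.comp_apply, LinearMap.smul_apply]
  rw [← hb, Submodule.mkQ_apply, Submodule.liftQ_apply]
  exact this

lemma injRel_prod (S : Submonoid R) (M : Type w) [AddCommGroup M] [Module R M]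
    {A C : Type v} [AddCommGroup A] [Module R A] [AddCommGroup C] [Module R C]
    (hA : IsUSInjRel R S M A) (hC : IsUSInjRel R S M C) : IsUSInjRel R S M (A × C) := by
  rw [isUSInjRel_iff] at hA hC ⊢
  intro K _ _ f hf
  set f₁ : K →ₗ[R] A := (LinearMap.fst R A C).comp f with hf₁
  set f₂ : K →ₗ[R] C := (LinearMap.snd R A C).comp f with hf₂
  set K₁ : Submodule R K := LinearMap.ker f₂ with hK₁
  set u : K₁ →ₗ[R] A := f₁.comp K₁.subtype with hu
  have hK₁le : K₁ ≤ LinearMap.ker f₂ := le_refl _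
  set v : K ⧸ K₁ →ₗ[R] C := K₁.liftQ f₂ hK₁le with hv
  have humono : IsUSMono R S u := by
    rw [isUSMono_iff] at hf ⊢
    obtain ⟨s, hs, h0⟩ := hf
    refine ⟨s, hs, fun k hk => ?_⟩
    have hk2 : f₂ k.1 = 0 := LinearMap.mem_ker.mp k.2
    have hk1 : f₁ k.1 = 0 := hk
    have : f k.1 = 0 := by
      have : f k.1 = (f₁ k.1, f₂ k.1) := rfl
      rw [this, hk1, hk2]; rfl
    have := h0 k.1 this
    exact Subtype.ext this
  have hvmono : IsUSMono R S v := by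
    rw [isUSMono_iff]
    refine ⟨1, S.one_mem, fun t ht => ?_⟩
    obtain ⟨k, rfl⟩ := K₁.mkQ_surjective t
    rw [Submodule.mkQ_apply] at ht ⊢
    rw [one_smul, Submodule.Quotient.mk_eq_zero]
    have : v (Submodule.Quotient.mk k) = f₂ k := Submodule.liftQ_apply _ _ _
    rw [this] at ht
    exact ht
  obtain ⟨s₁, hs₁, P₁⟩ := hA K₁ u humono
  obtain ⟨s₂, hs₂, P₂⟩ := hC (K ⧸ K₁) v hvmono
  refine ⟨s₂ * s₁, S.mul_mem hs₂ hs₁, fun g => ?_⟩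
  obtain ⟨hA', hhA⟩ := P₁ (g.comp K₁.subtype)
  set g' : K →ₗ[R] M := s₁ • g - hA'.comp f₁ with hg'
  have hg'le : K₁ ≤ LinearMap.ker g' := by
    intro k hk
    have := congrArg (fun t => t (⟨k, hk⟩ : K₁)) hhA
    simp only [LinearMap.comp_apply, LinearMap.smul_apply] at this
    have huval : u (⟨k, hk⟩ : K₁) = f₁ k := rfl
    rw [huval] at this
    simp only [LinearMap.mem_ker, hg', LinearMap.sub_apply, LinearMap.smul_apply,
      LinearMap.comp_apply]
    rw [this]
    simp [Submodule.coe_subtype]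
  set gbar : K ⧸ K₁ →ₗ[R] M := K₁.liftQ g' hg'le with hgbar
  obtain ⟨hC', hhC⟩ := P₂ gbar
  refine ⟨s₂ • (hA'.comp (LinearMap.fst R A C)) + hC'.comp (LinearMap.snd R A C), ?_⟩
  ext k
  have hvk : v (Submodule.Quotient.mk k) = f₂ k := Submodule.liftQ_apply _ _ _
  have hCk := congrArg (fun t => t (Submodule.Quotient.mk k : K ⧸ K₁)) hhC
  simp only [LinearMap.comp_apply, LinearMap.smul_apply] at hCk
  rw [hvk] at hCk
  have hgbark : gbar (Submodule.Quotient.mk k) = g' k := Submodule.liftQ_apply _ _ _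
  rw [hgbark] at hCk
  simp only [LinearMap.comp_apply, LinearMap.add_apply, LinearMap.smul_apply]
  have hfk : f k = (f₁ k, f₂ k) := rfl
  rw [hfk]
  show s₂ • hA' (f₁ k) + hC' (f₂ k) = (s₂ * s₁) • g k
  rw [hCk]
  simp only [hg', LinearMap.sub_apply, LinearMap.smul_apply, LinearMap.comp_apply]
  rw [smul_sub, mul_smul]
  abel

end Aux

section Main

variable {R}

/-- Linear equivalence splitting a Pi type over `Fin (n+1)`. -/
def piFinSuccLEquiv (n : ℕ) (A : Fin (n + 1) → Type v) [∀ i, AddCommGroup (A i)]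
    [∀ i, Module R (A i)] : (∀ i, A i) ≃ₗ[R] A 0 × ∀ i : Fin n, A i.succ where
  toFun x := (x 0, fun i => x i.succ)
  invFun p := Fin.cons p.1 p.2
  map_add' x y := rfl
  map_smul' r x := rfl
  left_inv x := Fin.cons_self_tail x
  right_inv p := by
    refine Prod.ext ?_ ?_
    · simp
    · funext i; simp

lemma injRel_equiv (S : Submonoid R) (M : Type w) [AddCommGroup M] [Module R M]
    {A B : Type v} [AddCommGroup A] [Module R A] [AddCommGroup B] [Module R B]
    (e : A ≃ₗ[R] B) (h : IsUSInjRel R S M B) : IsUSInjRel R S M A :=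
  injRel_of_injective S M (e : A →ₗ[R] B) e.injective h

end Main

open DirectSum in
theorem stmt11 (S : Submonoid R) (hS : (0 : R) ∉ S)
    (M : Type w) [AddCommGroup M] [Module R M] :
    (∀ (B : Type v) [AddCommGroup B] [Module R B] (A : Submodule R B),
      IsUSInjRel R S M B → IsUSInjRel R S M A ∧ IsUSInjRel R S M (B ⧸ A)) ∧
    (∀ (n : ℕ) (A : Fin n → Type v) [∀ i, AddCommGroup (A i)] [∀ i, Module R (A i)],
      IsUSInjRel R S M (⨁ i, A i) ↔ ∀ i, IsUSInjRel R S M (A i)) := by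
  constructor
  · intro B _ _ A hB
    exact ⟨injRel_of_injective S M A.subtype A.injective_subtype hB, injRel_quot S M A hB⟩
  · intro n
    induction n with
    | zero =>
      intro A _ _
      have : Subsingleton (⨁ i : Fin 0, A i) :=
        ⟨fun a b => DFinsupp.ext fun i => i.elim0⟩
      constructor
      · intro _ i; exact i.elim0
      · intro _; exact injRel_subsingleton S M _
    | succ n ih =>
      intro A _ _
      have e : (⨁ i, A i) ≃ₗ[R] A 0 × ∀ i : Fin n, A i.succ :=
        (DirectSum.linearEquivFunOnFintype R (Fin (n + 1)) A).trans (piFinSuccLEquiv n A)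
      have erest : (⨁ i : Fin n, A i.succ) ≃ₗ[R] ∀ i : Fin n, A i.succ :=
        DirectSum.linearEquivFunOnFintype R (Fin n) (fun i => A i.succ)
      constructor
      · intro h i
        exact injRel_of_injective S M (DirectSum.lof R (Fin (n + 1)) A i)
          (fun x y hxy => by
            have := congrArg (DirectSum.component R (Fin (n + 1)) A i) hxy
            rwa [DirectSum.component.lof_self, DirectSum.component.lof_self] at this) h
      · intro h
        have h0 := h 0
        have hrest : IsUSInjRel R S M (∀ i : Fin n, A i.succ) :=
          injRel_equiv S M erest.symm (((ih (fun i => A i.succ)).mpr (fun i => h i.succ)))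
        exact injRel_equiv S M e (injRel_prod S M h0 hrest)
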